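/- arXiv:1101.5515 — 4 statements merged into one kernel-verified Lean document; each statement's English description precedes it below -/
import Mathlib

section
/- Let B be a real Banach space and {x_k}_{k=1}^∞ a sequence in B that is a basis for B, i.e., for each x ∈ B there exist unique scalars p_k(x) ∈ ℝ such that x = Σ_{k=1}^∞ p_k(x)·x_k, where the series converges in norm (the partial sums Σ_{k=1}^n p_k(x)·x_k converge to x). Then for every k, the coordinate functional p_k : B → ℝ is a continuous (bounded) linear functional; that is, every basis of a Banach space is a Schauder basis. -/
/-!
Encode an expansion `∑ c k • x k` by its sequence of partial sums. Those sequences form a closed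
subspace of `ℓ^∞(ℕ, B)`, hence a Banach space, on which taking the limit is a bounded linear map
to `B`; existence and uniqueness of expansions make it bijective, so by the open mapping theorem
its inverse is bounded. The `k`-th coefficient is the increment `S (k+1) - S k` divided by `x k`,
a bounded functional of the partial-sum sequence `S`, and composing it with the inverse gives `p k`.
-/

open Filter Topology BoundedContinuousFunction

theorem BoundedContinuousFunction.isClosed_setOf_cauchySeq {ι E : Type*} [TopologicalSpace ι]
    [Nonempty ι] [SemilatticeSup ι] [PseudoMetricSpace E] :
    IsClosed {f : ι →ᵇ E | CauchySeq f} := by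
  refine isClosed_of_closure_subset fun f hf => Metric.cauchySeq_iff'.2 fun ε hε => ?_
  obtain ⟨g, hg, hfg⟩ := Metric.mem_closure_iff.1 hf (ε / 3) (by positivity)
  obtain ⟨N, hN⟩ := Metric.cauchySeq_iff'.1 hg (ε / 3) (by positivity)
  refine ⟨N, fun n hn => ?_⟩
  calc dist (f n) (f N) ≤ dist (f n) (g n) + dist (g n) (g N) + dist (g N) (f N) :=
        dist_triangle4 ..
    _ < ε / 3 + ε / 3 + ε / 3 := by
        gcongr
        · exact (dist_coe_le_dist n).trans_lt hfg
        · exact hN n hn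
        · exact (dist_coe_le_dist N).trans_lt (dist_comm f g ▸ hfg)
    _ = ε := by ring

namespace SeriesExpansion

variable (𝕜 : Type*) {E : Type*} [NontriviallyNormedField 𝕜] [NormedAddCommGroup E]
  [NormedSpace 𝕜 E]

/-- The sequences of partial sums of convergent series `∑ c k • x k`, normed by the supremum of
the partial sums: the Banach space of admissible coefficient sequences in disguise. -/
def partialSumSpace (x : ℕ → E) : Submodule 𝕜 (ℕ →ᵇ E) where
  carrier := {f | f 0 = 0 ∧ (∀ n, f (n + 1) - f n ∈ 𝕜 ∙ x n) ∧ CauchySeq f}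
  zero_mem' := ⟨rfl, fun n => by simp, cauchySeq_const 0⟩
  add_mem' := fun {f g} ⟨hf₀, hf, hfc⟩ ⟨hg₀, hg, hgc⟩ =>
    ⟨by simp [hf₀, hg₀], fun n => by simpa [add_sub_add_comm] using add_mem (hf n) (hg n),
      by simpa using hfc.add hgc⟩
  smul_mem' := fun c f ⟨hf₀, hf, hfc⟩ =>
    ⟨by simp [hf₀], fun n => by simpa [smul_sub] using Submodule.smul_mem _ c (hf n),
      by rw [coe_smul]; exact (uniformContinuous_const_smul c).comp_cauchySeq hfc⟩

variable {𝕜} {x : ℕ → E}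

theorem isClosed_partialSumSpace [CompleteSpace 𝕜] :
    IsClosed (partialSumSpace 𝕜 x : Set (ℕ →ᵇ E)) := by
  have hincr (n : ℕ) : IsClosed {f : ℕ →ᵇ E | f (n + 1) - f n ∈ 𝕜 ∙ x n} := by
    exact (Submodule.closed_of_finiteDimensional (𝕜 ∙ x n)).preimage
      ((evalCLM 𝕜 (n + 1) - evalCLM 𝕜 n : (ℕ →ᵇ E) →L[𝕜] E).continuous)
  have hzero : IsClosed {f : ℕ →ᵇ E | f 0 = 0} :=
    isClosed_eq (evalCLM 𝕜 0 : (ℕ →ᵇ E) →L[𝕜] E).continuous continuous_const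
  convert hzero.inter ((isClosed_iInter hincr).inter isClosed_setOf_cauchySeq) using 1
  ext f
  simp [partialSumSpace]

instance [CompleteSpace 𝕜] [CompleteSpace E] : CompleteSpace (partialSumSpace 𝕜 x) :=
  isClosed_partialSumSpace.completeSpace_coe

section limit

variable [CompleteSpace E]

theorem tendsto_limUnder_coe (f : partialSumSpace 𝕜 x) :
    Tendsto (f : ℕ →ᵇ E) atTop (𝓝 (limUnder atTop (f : ℕ →ᵇ E))) :=
  f.2.2.2.tendsto_limUnder

noncomputable def sumCLM : partialSumSpace 𝕜 x →L[𝕜] E :=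
  LinearMap.mkContinuous
    { toFun f := limUnder atTop (f : ℕ →ᵇ E)
      map_add' f g := tendsto_nhds_unique (tendsto_limUnder_coe (f + g))
        ((tendsto_limUnder_coe f).add (tendsto_limUnder_coe g))
      map_smul' c f := tendsto_nhds_unique (tendsto_limUnder_coe (c • f))
        ((tendsto_limUnder_coe f).const_smul c) }
    1 fun f => by
      simpa using le_of_tendsto (tendsto_limUnder_coe f).norm
        (Eventually.of_forall fun n => (f : ℕ →ᵇ E).norm_coe_le_norm n)

theorem tendsto_sumCLM (f : partialSumSpace 𝕜 x) :
    Tendsto (f : ℕ →ᵇ E) atTop (𝓝 (sumCLM f)) :=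
  tendsto_limUnder_coe f

end limit

section coeff

variable (hx : ∀ k, x k ≠ 0)

/-- The increment `f (k + 1) - f k`, measured in units of `x k`. -/
noncomputable def coeff (k : ℕ) : partialSumSpace 𝕜 x →L[𝕜] 𝕜 :=
  (ContinuousLinearEquiv.coord 𝕜 (x k) (hx k)).comp
    (((evalCLM 𝕜 (k + 1) - evalCLM 𝕜 k : (ℕ →ᵇ E) →L[𝕜] E).comp
      (partialSumSpace 𝕜 x).subtypeL).codRestrict _ fun f => by exact f.2.2.1 k)

theorem coeff_smul (f : partialSumSpace 𝕜 x) (k : ℕ) :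
    coeff hx k f • x k = (f : ℕ →ᵇ E) (k + 1) - (f : ℕ →ᵇ E) k :=
  congrArg Subtype.val (ContinuousLinearEquiv.toSpanNonzeroSingleton_coord 𝕜 (hx k) _)

theorem sum_coeff_smul (f : partialSumSpace 𝕜 x) (n : ℕ) :
    ∑ k ∈ Finset.range n, coeff hx k f • x k = (f : ℕ →ᵇ E) n := by
  simp only [coeff_smul, Finset.sum_range_sub, f.2.1, sub_zero]

end coeff

variable (𝕜) in
def OmegaIndependent (x : ℕ → E) : Prop :=
  ∀ c : ℕ → 𝕜,
    Tendsto (fun n => ∑ k ∈ Finset.range n, c k • x k) atTop (𝓝 0) → c = 0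

theorem OmegaIndependent.ne_zero (hx : OmegaIndependent 𝕜 x) (k : ℕ) : x k ≠ 0 := by
  intro hk
  have hsingle : Tendsto (fun n => ∑ j ∈ Finset.range n, (Pi.single k 1 : ℕ → 𝕜) j • x j)
      atTop (𝓝 0) := by
    refine tendsto_const_nhds.congr fun n => (Finset.sum_eq_zero fun j _ => ?_).symm
    rcases eq_or_ne j k with rfl | hj
    · simp [hk]
    · simp [hj]
  simpa using congrFun (hx _ hsingle) k

noncomputable def ofTendsto (c : ℕ → 𝕜) {v : E}
    (hc : Tendsto (fun n => ∑ k ∈ Finset.range n, c k • x k) atTop (𝓝 v)) :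
    partialSumSpace 𝕜 x :=
  ⟨ofNormedAddCommGroupDiscrete _ _ (hc.cauchySeq.isBounded_range.exists_norm_le.choose_spec
      _ ⟨·, rfl⟩),
    by simp, fun n => by
      simpa [Finset.sum_range_succ] using
        Submodule.smul_mem _ (c n) (Submodule.mem_span_singleton_self (x n)),
    hc.cauchySeq⟩

variable [CompleteSpace E]

theorem sumCLM_ofTendsto (c : ℕ → 𝕜) {v : E}
    (hc : Tendsto (fun n => ∑ k ∈ Finset.range n, c k • x k) atTop (𝓝 v)) :
    sumCLM (ofTendsto c hc) = v :=
  tendsto_nhds_unique (tendsto_sumCLM _) hc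

theorem sumCLM_surjective
    (hexists : ∀ v : E, ∃ c : ℕ → 𝕜,
      Tendsto (fun n => ∑ k ∈ Finset.range n, c k • x k) atTop (𝓝 v)) :
    Function.Surjective (sumCLM : partialSumSpace 𝕜 x →L[𝕜] E) := fun v =>
  let ⟨c, hc⟩ := hexists v
  ⟨ofTendsto c hc, sumCLM_ofTendsto c hc⟩

theorem sumCLM_injective (hx : OmegaIndependent 𝕜 x) :
    Function.Injective (sumCLM : partialSumSpace 𝕜 x →L[𝕜] E) := by
  refine (injective_iff_map_eq_zero _).2 fun f hf => ?_
  have hcoeff : (fun k => coeff hx.ne_zero k f) = 0 :=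
    hx _ (by simpa only [sum_coeff_smul, ← hf] using tendsto_sumCLM f)
  ext n
  simp [← sum_coeff_smul hx.ne_zero f n, congrFun hcoeff]

theorem exists_continuous_coeff [CompleteSpace 𝕜]
    (hexists : ∀ v : E, ∃ c : ℕ → 𝕜,
      Tendsto (fun n => ∑ k ∈ Finset.range n, c k • x k) atTop (𝓝 v))
    (hx : OmegaIndependent 𝕜 x) : ∃ p : ℕ → E →L[𝕜] 𝕜, ∀ v : E,
      Tendsto (fun n => ∑ k ∈ Finset.range n, p k v • x k) atTop (𝓝 v) := by
  let e := ContinuousLinearEquiv.ofBijective (sumCLM : partialSumSpace 𝕜 x →L[𝕜] E)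
    (LinearMap.ker_eq_bot.2 (sumCLM_injective hx))
    (LinearMap.range_eq_top.2 (sumCLM_surjective hexists))
  refine ⟨fun k => (coeff hx.ne_zero k).comp e.symm.toContinuousLinearMap, fun v => ?_⟩
  simpa [sum_coeff_smul, e] using tendsto_sumCLM (e.symm v)

end SeriesExpansion

/-- Every basis of a Banach space is a Schauder basis: if each `v` has a unique
expansion `v = ∑ k, p k v • x k` (partial sums converging in norm), then the
coordinate functionals are continuous linear functionals. -/
theorem basis_is_schauder_basis
    {B : Type*} [NormedAddCommGroup B] [NormedSpace ℝ B] [CompleteSpace B]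
    (x : ℕ → B)
    (hbasis : ∀ v : B, ∃! c : ℕ → ℝ,
      Tendsto (fun n => ∑ k ∈ Finset.range n, c k • x k) atTop (nhds v)) :
    ∃ p : ℕ → B →L[ℝ] ℝ, ∀ v : B,
      Tendsto (fun n => ∑ k ∈ Finset.range n, p k v • x k) atTop (nhds v) :=
  SeriesExpansion.exists_continuous_coeff (fun v => (hbasis v).exists)
    fun c hc => (hbasis 0).unique hc (by simp)
end

section
/- Let B be a separable real Banach space and {x_k}_{k=1}^∞ a sequence in B with x_k ≠ 0 for every k that is dense in the closed unit ball {x ∈ B : ‖x‖ ≤ 1}. Then there exists a map T : B → ℓ¹ (the Banach space of absolutely summable real sequences) such that: (a) T is injective and is a homeomorphism of B onto its image T(B) ⊆ ℓ¹ (T is continuous and its inverse on T(B) is continuous); and (b) for every x ∈ B, x = Σ_{k=1}^∞ (Tx)_k·x_k, where the partial sums converge to x in the norm of B. -/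
open Filter Metric

open scoped ENNReal lp Topology

/-!
The weights `w k v = 2⁻ᵏ max 0 (1/2 - ‖v - x k‖)` depend continuously on `v` as an element of
`ℓ¹`, and by density they do not all vanish on the unit ball. Normalised, they give coefficients
`c v` whose synthesis `∑ c k v • x k` is a convex combination of points at distance at most `1/2`
from `v`: a continuous approximate right inverse of the synthesis map `S : ℓ¹ → B` on the unit
ball. Correcting the doubled residual again and again, as in the proof of the open mapping
theorem, and summing the resulting geometric series gives an exact continuous right inverse on
the ball, which extends to `B` by homogeneity. A continuous map with a continuous left inverse
is an embedding.
-/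

lemma lp.hasSum_norm_one {ι : Type*} {E : ι → Type*} [∀ i, NormedAddCommGroup (E i)]
    (c : lp E 1) : HasSum (fun i => ‖c i‖) ‖c‖ := by
  simpa using lp.hasSum_norm (p := 1) (by norm_num) c

lemma lp.continuous_of_dominated {X ι : Type*} [TopologicalSpace X] {E : ι → Type*}
    [∀ i, NormedAddCommGroup (E i)] [∀ i, CompleteSpace (E i)] {p : ℝ≥0∞} [Fact (1 ≤ p)]
    (hp : p ≠ ∞) {f : X → lp E p} {u : ι → ℝ} (hu : Summable u)
    (hf : ∀ i, Continuous fun v => f v i) (hfu : ∀ i v, ‖f v i‖ ≤ u i) : Continuous f := by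
  classical
  have hp0 : 0 < p := lt_of_lt_of_le one_pos Fact.out
  have hf_eq : f = fun v => ∑' i, lp.single p i (f v i) :=
    funext fun v => (lp.hasSum_single hp (f v)).tsum_eq.symm
  rw [hf_eq]
  exact continuous_tsum (fun i => (lp.isometry_single i).continuous.comp (hf i)) hu
    fun i v => by rw [lp.norm_single hp0]; exact hfu i v

section Synthesis

variable {ι B : Type*} [NormedAddCommGroup B] [NormedSpace ℝ B] [CompleteSpace B]
  (x : ι → B) {C : ℝ}

lemma summable_smul_of_bounded (hC : ∀ k, ‖x k‖ ≤ C) (c : ℓ¹(ι, ℝ)) :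
    Summable fun k => c k • x k :=
  Summable.of_norm_bounded ((lp.hasSum_norm_one c).summable.mul_right C) fun k => by
    rw [norm_smul]; exact mul_le_mul_of_nonneg_left (hC k) (norm_nonneg _)

noncomputable def synthesis (hC : ∀ k, ‖x k‖ ≤ C) : ℓ¹(ι, ℝ) →L[ℝ] B :=
  LinearMap.mkContinuous
    { toFun c := ∑' k, c k • x k
      map_add' c d := by
        simp only [lp.coeFn_add, Pi.add_apply, add_smul]
        exact (summable_smul_of_bounded x hC c).tsum_add (summable_smul_of_bounded x hC d)
      map_smul' a c := by
        simp only [lp.coeFn_smul, Pi.smul_apply, smul_assoc, RingHom.id_apply]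
        exact (summable_smul_of_bounded x hC c).tsum_const_smul a }
    C fun c => (summable_smul_of_bounded x hC c).hasSum.norm_le_of_bounded
      ((lp.hasSum_norm_one c).mul_left C) fun k => by
        rw [norm_smul, mul_comm]; exact mul_le_mul_of_nonneg_right (hC k) (norm_nonneg _)

lemma hasSum_synthesis (hC : ∀ k, ‖x k‖ ≤ C) (c : ℓ¹(ι, ℝ)) :
    HasSum (fun k => c k • x k) (synthesis x hC c) :=
  (summable_smul_of_bounded x hC c).hasSum

lemma norm_sub_synthesis_le (hC : ∀ k, ‖x k‖ ≤ C) {c : ℓ¹(ι, ℝ)} (hc0 : ∀ k, 0 ≤ c k)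
    (hc1 : ‖c‖ = 1) {v : B} {r : ℝ} (hr : ∀ k, c k ≠ 0 → ‖v - x k‖ ≤ r) :
    ‖v - synthesis x hC c‖ ≤ r := by
  have hsum_c : HasSum (fun k => c k) 1 := by
    simpa [Real.norm_of_nonneg (hc0 _), hc1] using lp.hasSum_norm_one c
  have hsum : HasSum (fun k => c k • (v - x k)) (v - synthesis x hC c) := by
    simpa [smul_sub] using (hsum_c.smul_const v).sub (hasSum_synthesis x hC c)
  refine hsum.norm_le_of_bounded (by simpa using hsum_c.mul_right r) fun k => ?_
  rw [norm_smul, Real.norm_of_nonneg (hc0 k)]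
  by_cases hk : c k = 0
  · simp [hk]
  · exact mul_le_mul_of_nonneg_left (hr k hk) (hc0 k)

end Synthesis

section RightInverse

variable {E F : Type*} [NormedAddCommGroup E] [NormedSpace ℝ E]
  [NormedAddCommGroup F] [NormedSpace ℝ F] (S : E →L[ℝ] F)

theorem ContinuousLinearMap.exists_continuous_rightInverse_of_closedBall {R : F → E}
    (hR : ContinuousOn R (closedBall 0 1)) (hSR : ∀ y ∈ closedBall (0 : F) 1, S (R y) = y) :
    ∃ T : F → E, Continuous T ∧ Function.LeftInverse S T := by
  have hmem : ∀ y : F, (‖y‖ + 1)⁻¹ • y ∈ closedBall (0 : F) 1 := fun y => by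
    rw [mem_closedBall_zero_iff, norm_smul, norm_inv, Real.norm_of_nonneg (by positivity),
      inv_mul_le_iff₀ (by positivity)]
    linarith
  have hscale : Continuous fun y : F => ‖y‖ + 1 := continuous_norm.add continuous_const
  refine ⟨fun y => (‖y‖ + 1) • R ((‖y‖ + 1)⁻¹ • y),
    hscale.smul (hR.comp_continuous ((hscale.inv₀ fun y => by positivity).smul continuous_id) hmem),
    fun y => ?_⟩
  rw [map_smul, hSR _ (hmem y), smul_inv_smul₀ (by positivity)]

variable (c : F → E)

/-- After `n` correction steps, `2⁻¹ ^ n • correctionResidual S c y n` is what is left of `y`. -/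
noncomputable def correctionResidual (y : F) : ℕ → F
  | 0 => y
  | n + 1 => (2 : ℝ) • (correctionResidual y n - S (c (correctionResidual y n)))

lemma map_sum_correction (y : F) (n : ℕ) :
    S (∑ i ∈ Finset.range n, (2⁻¹ : ℝ) ^ i • c (correctionResidual S c y i)) =
      y - (2⁻¹ : ℝ) ^ n • correctionResidual S c y n := by
  induction n with
  | zero => simp [correctionResidual]
  | succ n ih =>
    rw [Finset.sum_range_succ, map_add, ih, map_smul, correctionResidual, pow_succ]
    module

variable {c}

lemma correctionResidual_mem_closedBall
    (happrox : ∀ y ∈ closedBall (0 : F) 1, ‖y - S (c y)‖ ≤ 2⁻¹) {y : F}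
    (hy : y ∈ closedBall 0 1) (n : ℕ) :
    correctionResidual S c y n ∈ closedBall 0 1 := by
  induction n with
  | zero => exact hy
  | succ n ih =>
    have := happrox _ ih
    rw [mem_closedBall_zero_iff, correctionResidual, norm_smul, Real.norm_two]
    linarith

lemma continuousOn_correctionResidual
    (happrox : ∀ y ∈ closedBall (0 : F) 1, ‖y - S (c y)‖ ≤ 2⁻¹)
    (hc : ContinuousOn c (closedBall 0 1)) (n : ℕ) :
    ContinuousOn (fun y => correctionResidual S c y n) (closedBall 0 1) := by
  induction n with
  | zero => exact continuousOn_id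
  | succ n ih =>
    exact continuousOn_const.smul (ih.sub (S.continuous.comp_continuousOn
      (hc.comp ih fun y hy => correctionResidual_mem_closedBall S happrox hy n)))

theorem ContinuousLinearMap.exists_continuousOn_rightInverse_closedBall_of_approx
    [CompleteSpace E] (happrox : ∀ y ∈ closedBall (0 : F) 1, ‖y - S (c y)‖ ≤ 2⁻¹)
    (hc : ContinuousOn c (closedBall 0 1)) {K : ℝ}
    (hK : ∀ y ∈ closedBall (0 : F) 1, ‖c y‖ ≤ K) :
    ∃ R : F → E, ContinuousOn R (closedBall 0 1) ∧ ∀ y ∈ closedBall (0 : F) 1, S (R y) = y := by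
  have hgeom : Summable fun n => K * (2⁻¹ : ℝ) ^ n :=
    (summable_geometric_of_lt_one (by norm_num) (by norm_num)).mul_left K
  have hbound : ∀ n, ∀ y ∈ closedBall (0 : F) 1,
      ‖(2⁻¹ : ℝ) ^ n • c (correctionResidual S c y n)‖ ≤ K * (2⁻¹ : ℝ) ^ n := fun n y hy => by
    rw [norm_smul, norm_pow, norm_inv, Real.norm_two, mul_comm]
    gcongr
    exact hK _ (correctionResidual_mem_closedBall S happrox hy n)
  refine ⟨fun y => ∑' n, (2⁻¹ : ℝ) ^ n • c (correctionResidual S c y n),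
    continuousOn_tsum (fun n => continuousOn_const.smul
      (hc.comp (continuousOn_correctionResidual S happrox hc n)
        fun y hy => correctionResidual_mem_closedBall S happrox hy n)) hgeom hbound,
    fun y hy => ?_⟩
  have hsum := (hgeom.of_norm_bounded fun n => hbound n y hy).hasSum
  have hlim := ((S.continuous.tendsto _).comp hsum.tendsto_sum_nat)
  simp only [Function.comp_def, map_sum_correction] at hlim
  refine tendsto_nhds_unique hlim ?_
  have hres : Tendsto (fun n => (2⁻¹ : ℝ) ^ n • correctionResidual S c y n) atTop (𝓝 0) := by
    refine squeeze_zero_norm (fun n => ?_) (tendsto_pow_atTop_nhds_zero_of_lt_one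
      (by norm_num : (0 : ℝ) ≤ 2⁻¹) (by norm_num))
    rw [norm_smul, norm_pow, norm_inv, Real.norm_two]
    exact mul_le_of_le_one_right (by positivity)
      (mem_closedBall_zero_iff.1 (correctionResidual_mem_closedBall S happrox hy n))
  simpa using tendsto_const_nhds.sub hres

end RightInverse

section BumpWeights

variable {X : Type*} [PseudoMetricSpace X] (x : ℕ → X) (r : ℝ)

lemma abs_bumpWeight_le (v : X) (k : ℕ) :
    |(2⁻¹ : ℝ) ^ k * max 0 (r - dist v (x k))| ≤ |r| * (2⁻¹ : ℝ) ^ k := by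
  rw [abs_of_nonneg (by positivity), mul_comm]
  gcongr
  exact max_le (abs_nonneg r) (by linarith [le_abs_self r, dist_nonneg (x := v) (y := x k)])

lemma summable_abs_mul_geometric : Summable fun k : ℕ => |r| * (2⁻¹ : ℝ) ^ k :=
  (summable_geometric_of_lt_one (by norm_num) (by norm_num)).mul_left |r|

noncomputable def bumpWeights (v : X) : ℓ¹(ℕ, ℝ) :=
  ⟨fun k => (2⁻¹ : ℝ) ^ k * max 0 (r - dist v (x k)),
    (memℓp_gen (by simpa using summable_abs_mul_geometric r)).mono (abs_bumpWeight_le x r v)⟩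

lemma bumpWeights_apply (v : X) (k : ℕ) :
    bumpWeights x r v k = (2⁻¹ : ℝ) ^ k * max 0 (r - dist v (x k)) := rfl

lemma bumpWeights_nonneg (v : X) (k : ℕ) : 0 ≤ bumpWeights x r v k := by
  rw [bumpWeights_apply]; positivity

lemma dist_lt_of_bumpWeights_ne_zero {v : X} {k : ℕ} (h : bumpWeights x r v k ≠ 0) :
    dist v (x k) < r := by
  by_contra! hk
  exact h (by rw [bumpWeights_apply, max_eq_left (by linarith), mul_zero])

lemma bumpWeights_ne_zero {v : X} (hv : v ∈ closure (Set.range x)) (hr : 0 < r) :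
    bumpWeights x r v ≠ 0 := by
  obtain ⟨k, hk⟩ := mem_closure_range_iff.1 hv r hr
  have hk_pos : 0 < bumpWeights x r v k :=
    mul_pos (by positivity) (lt_max_of_lt_right (by linarith))
  intro h
  rw [h] at hk_pos
  exact hk_pos.false

lemma continuous_bumpWeights : Continuous (bumpWeights x r) :=
  lp.continuous_of_dominated ENNReal.one_ne_top (summable_abs_mul_geometric r)
    (fun k => by simp only [bumpWeights_apply]; fun_prop)
    fun k v => by rw [Real.norm_eq_abs]; exact abs_bumpWeight_le x r v k

end BumpWeights

lemma exists_continuousOn_synthesis_approx {B : Type*} [NormedAddCommGroup B] [NormedSpace ℝ B]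
    [CompleteSpace B] {x : ℕ → B} {C : ℝ} (hC : ∀ k, ‖x k‖ ≤ C) {s : Set B}
    (hs : s ⊆ closure (Set.range x)) {r : ℝ} (hr : 0 < r) :
    ∃ c : B → ℓ¹(ℕ, ℝ), ContinuousOn c s ∧ (∀ v ∈ s, ‖c v‖ = 1) ∧
      ∀ v ∈ s, ‖v - synthesis x hC (c v)‖ ≤ r := by
  set w := bumpWeights x r
  have hw : ∀ v ∈ s, w v ≠ 0 := fun v hv => bumpWeights_ne_zero x r (hs hv) hr
  have hc_norm : ∀ v ∈ s, ‖(‖w v‖⁻¹ : ℝ) • w v‖ = 1 := fun v hv =>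
    norm_smul_inv_norm (𝕜 := ℝ) (hw v hv)
  refine ⟨fun v => (‖w v‖⁻¹ : ℝ) • w v,
    ((continuous_bumpWeights x r).norm.continuousOn.inv₀
      fun v hv => norm_ne_zero_iff.2 (hw v hv)).smul (continuous_bumpWeights x r).continuousOn,
    hc_norm, fun v hv => ?_⟩
  have hc_apply : ∀ k, ((‖w v‖⁻¹ : ℝ) • w v) k = ‖w v‖⁻¹ * w v k := fun k => rfl
  refine norm_sub_synthesis_le x hC (fun k => ?_) (hc_norm v hv) fun k hk => ?_
  · rw [hc_apply]
    exact mul_nonneg (by positivity) (bumpWeights_nonneg x r v k)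
  · rw [hc_apply] at hk
    rw [← dist_eq_norm]
    exact (dist_lt_of_bumpWeights_ne_zero x r (right_ne_zero_of_mul hk)).le

theorem dense_in_ball_pseudo_basis_general
    {B : Type*} [NormedAddCommGroup B] [NormedSpace ℝ B] [CompleteSpace B]
    (x : ℕ → B)
    (hdense : closure (Set.range x) = Metric.closedBall (0 : B) 1) :
    ∃ T : B → lp (fun _ : ℕ => ℝ) 1,
      Function.Injective T ∧ Topology.IsEmbedding T ∧
      ∀ v : B, Tendsto (fun n => ∑ k ∈ Finset.range n, T v k • x k) atTop (nhds v) := by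
  have hx1 : ∀ k, ‖x k‖ ≤ 1 := fun k =>
    mem_closedBall_zero_iff.1 (hdense ▸ subset_closure (Set.mem_range_self k))
  set S := synthesis x hx1
  obtain ⟨c, hc_cont, hc_norm, happrox⟩ :=
    exists_continuousOn_synthesis_approx hx1 hdense.symm.subset (by norm_num : (0 : ℝ) < 2⁻¹)
  obtain ⟨R, hR, hSR⟩ := S.exists_continuousOn_rightInverse_closedBall_of_approx happrox hc_cont
    fun v hv => (hc_norm v hv).le
  obtain ⟨T, hT, hST⟩ := S.exists_continuous_rightInverse_of_closedBall hR hSR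
  refine ⟨T, hST.injective, hST.isEmbedding S.continuous hT, fun v => ?_⟩
  have hsum : HasSum (fun k => T v k • x k) (S (T v)) := hasSum_synthesis x hx1 (T v)
  rw [hST v] at hsum
  exact hsum.tendsto_sum_nat

/-- Any sequence of nonzero vectors dense in the closed unit ball of a separable
Banach space is a pseudo-basis whose coefficients depend homeomorphically on the
point, through a map into `ℓ¹`. -/
theorem dense_in_ball_pseudo_basis
    {B : Type*} [NormedAddCommGroup B] [NormedSpace ℝ B] [CompleteSpace B]
    [TopologicalSpace.SeparableSpace B]
    (x : ℕ → B) (hx : ∀ k, x k ≠ 0)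
    (hdense : closure (Set.range x) = Metric.closedBall (0 : B) 1) :
    ∃ T : B → lp (fun _ : ℕ => ℝ) 1,
      Function.Injective T ∧ Topology.IsEmbedding T ∧
      ∀ v : B, Tendsto (fun n => ∑ k ∈ Finset.range n, T v k • x k) atTop (nhds v) :=
  dense_in_ball_pseudo_basis_general x hdense
end

section
/- Every nontrivial separable real Banach space B (i.e., B ≠ {0}) has a pseudo-basis: there exists a sequence {x_k}_{k=1}^∞ in B with x_k ≠ 0 for all k such that for every x ∈ B there exists a sequence of scalars (c_k) with x = Σ_{k=1}^∞ c_k·x_k, where the partial sums converge to x in norm. -/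
open Filter

/-- Every nontrivial separable Banach space has a pseudo-basis. -/
theorem separable_banach_has_pseudo_basis
    {B : Type*} [NormedAddCommGroup B] [NormedSpace ℝ B] [CompleteSpace B]
    [TopologicalSpace.SeparableSpace B] [Nontrivial B] :
    ∃ x : ℕ → B, (∀ k, x k ≠ 0) ∧
      ∀ v : B, ∃ c : ℕ → ℝ,
        Tendsto (fun n => ∑ k ∈ Finset.range n, c k • x k) atTop (nhds v) := by
  classical
  obtain ⟨e, he⟩ := exists_ne (0 : B)
  obtain ⟨d, hd⟩ := TopologicalSpace.exists_dense_seq B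
  set x : ℕ → B := fun k =>
    if d k.unpair.1 = 0 then ((k.unpair.2 + 1 : ℝ)⁻¹) • e else d k.unpair.1 with hx
  have hxne : ∀ k, x k ≠ 0 := by
    intro k
    simp only [hx]
    split
    · exact smul_ne_zero (ne_of_gt (by positivity)) he
    · assumption
  have hdense : ∀ (u : B) (ε : ℝ), 0 < ε → ∀ N : ℕ, ∃ m, N ≤ m ∧ ‖u - x m‖ < ε := by
    intro u ε hε N
    obtain ⟨n, hn⟩ := hd.exists_dist_lt u (half_pos hε)
    rw [dist_eq_norm] at hn
    by_cases h0 : d n = 0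
    · have hu : ‖u‖ < ε / 2 := by rwa [h0, sub_zero] at hn
      obtain ⟨m0, hm0⟩ := exists_nat_gt (2 * ‖e‖ / ε)
      set m := max N m0 with hm
      refine ⟨Nat.pair n m, le_trans (le_max_left _ _) (Nat.right_le_pair _ _), ?_⟩
      have hxval : x (Nat.pair n m) = ((m + 1 : ℝ)⁻¹) • e := by
        simp [hx, Nat.unpair_pair, h0]
      have hmm : (2 * ‖e‖ / ε : ℝ) < m := lt_of_lt_of_le hm0 (by exact_mod_cast le_max_right N m0)
      have hsm : ‖((m + 1 : ℝ)⁻¹) • e‖ < ε / 2 := by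
        rw [norm_smul, Real.norm_eq_abs, abs_of_pos (by positivity)]
        rw [div_lt_iff₀ hε] at hmm
        rw [inv_mul_lt_iff₀ (by positivity)]
        nlinarith [norm_nonneg e]
      calc ‖u - x (Nat.pair n m)‖ ≤ ‖u‖ + ‖x (Nat.pair n m)‖ := norm_sub_le _ _
        _ < ε / 2 + ε / 2 := by rw [hxval]; exact add_lt_add hu hsm
        _ = ε := add_halves ε
    · refine ⟨Nat.pair n N, Nat.right_le_pair _ _, ?_⟩
      have hxval : x (Nat.pair n N) = d n := by simp [hx, Nat.unpair_pair, h0]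
      rw [hxval]
      linarith
  refine ⟨x, hxne, fun v => ?_⟩
  let r : ℕ → B := fun n =>
    Nat.rec v (fun k u => if ‖u - x k‖ ≤ ‖u‖ / 2 then u - x k else u) n
  have hr0 : r 0 = v := rfl
  have hrs : ∀ n, r (n + 1) = if ‖r n - x n‖ ≤ ‖r n‖ / 2 then r n - x n else r n :=
    fun n => rfl
  set c : ℕ → ℝ := fun k => if ‖r k - x k‖ ≤ ‖r k‖ / 2 then 1 else 0 with hc
  have hsum : ∀ n, ∑ k ∈ Finset.range n, c k • x k = v - r n := by
    intro n
    have hterm : ∀ k, c k • x k = r k - r (k + 1) := by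
      intro k
      by_cases h : ‖r k - x k‖ ≤ ‖r k‖ / 2
      · rw [hrs k, if_pos h]
        simp [hc, h]
      · rw [hrs k, if_neg h]
        simp [hc, h]
    simp_rw [hterm]
    rw [Finset.sum_range_sub' (fun k => r k), hr0]
  have hmono : ∀ n, ‖r (n + 1)‖ ≤ ‖r n‖ := by
    intro n
    rw [hrs n]
    split
    · linarith [norm_nonneg (r n), ‹‖r n - x n‖ ≤ ‖r n‖ / 2›]
    · exact le_rfl
  have hanti : Antitone (fun n => ‖r n‖) := antitone_nat_of_succ_le hmono
  have hhalf : ∀ n, ∃ m, ‖r m‖ ≤ ‖r n‖ / 2 := by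
    intro n
    rcases eq_or_ne (r n) 0 with h0 | h0
    · exact ⟨n, by simp [h0]⟩
    · have hpos : 0 < ‖r n‖ / 2 := by have := norm_pos_iff.mpr h0; linarith
      obtain ⟨m, hmn, hm⟩ := hdense (r n) (‖r n‖ / 2) hpos n
      have key : ∀ m', n ≤ m' → r m' = r n ∨ ∃ p, ‖r p‖ ≤ ‖r n‖ / 2 := by
        intro m' hm'
        induction m', hm' using Nat.le_induction with
        | base => exact Or.inl rfl
        | succ m' hm' ih =>
          rcases ih with heq | h
          · by_cases hcond : ‖r m' - x m'‖ ≤ ‖r m'‖ / 2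
            · right
              refine ⟨m' + 1, ?_⟩
              rw [hrs m', if_pos hcond]
              calc ‖r m' - x m'‖ ≤ ‖r m'‖ / 2 := hcond
                _ ≤ ‖r n‖ / 2 := by rw [heq]
            · left
              rw [hrs m', if_neg hcond, heq]
          · exact Or.inr h
      rcases key m hmn with heq | h
      · have hcond : ‖r m - x m‖ ≤ ‖r m‖ / 2 := by rw [heq]; exact le_of_lt hm
        refine ⟨m + 1, ?_⟩
        rw [hrs m, if_pos hcond]
        calc ‖r m - x m‖ ≤ ‖r m‖ / 2 := hcond
          _ = ‖r n‖ / 2 := by rw [heq]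
      · exact h
  have hiter : ∀ j : ℕ, ∃ m, ‖r m‖ ≤ ‖v‖ / 2 ^ j := by
    intro j
    induction j with
    | zero => exact ⟨0, by rw [hr0]; simp⟩
    | succ j ih =>
      obtain ⟨m, hm⟩ := ih
      obtain ⟨m', hm'⟩ := hhalf m
      refine ⟨m', ?_⟩
      calc ‖r m'‖ ≤ ‖r m‖ / 2 := hm'
        _ ≤ ‖v‖ / 2 ^ j / 2 := by linarith
        _ = ‖v‖ / 2 ^ (j + 1) := by rw [pow_succ]; ring
  have hnorm : Tendsto (fun n => ‖r n‖) atTop (nhds 0) := by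
    rw [Metric.tendsto_atTop]
    intro ε hε
    obtain ⟨j, hj⟩ := pow_unbounded_of_one_lt (‖v‖ / ε) (one_lt_two : (1 : ℝ) < 2)
    have hjε : ‖v‖ / 2 ^ j < ε := by
      rw [div_lt_iff₀ hε] at hj
      rw [div_lt_iff₀ (by positivity : (0:ℝ) < 2 ^ j)]
      linarith
    obtain ⟨m, hm⟩ := hiter j
    refine ⟨m, fun n hn => ?_⟩
    rw [Real.dist_eq, sub_zero, abs_of_nonneg (norm_nonneg _)]
    exact lt_of_le_of_lt (le_trans (hanti hn) hm) hjε
  have hr : Tendsto r atTop (nhds 0) := squeeze_zero_norm (fun n => le_refl _) hnorm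
  refine ⟨c, ?_⟩
  have htend : Tendsto (fun n => v - r n) atTop (nhds v) := by
    simpa using tendsto_const_nhds.sub hr
  exact htend.congr (fun n => (hsum n).symm)
end

section
/- Let X be a real Banach space with topological dual X*, let t > 0, let x : [0,∞) → X be cadlag (right-continuous with left limits at every point), and let y* : [0,∞) → X* be cadlag with finite total variation on [0,t]: T_t(y*) := sup_σ Σ_i ‖y*(t_i) − y*(t_{i−1})‖_{X*} < ∞, the supremum being over all finite partitions σ = {0 = t_0 < t_1 < ⋯ < t_m = t} of [0,t]. Then the left-endpoint Riemann–Stieltjes sums converge as the mesh tends to zero: there exists L ∈ ℝ such that for every ε > 0 there is δ > 0 so that for every finite partition 0 = t_0 < t_1 < ⋯ < t_m = t with max_i (t_{i+1} − t_i) < δ, one has |Σ_{i=0}^{m−1} ⟨x(t_i), y*(t_{i+1}) − y*(t_i)⟩ − L| < ε, where ⟨h, h*⟩ = h*(h) denotes the duality pairing between X and X*. -/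
open Filter Set

/-- A function on `[0,∞)` (modelled as a function on `ℝ`) with values in a
topological space is cadlag if it is right-continuous at every point of `[0,∞)`
and has left limits at every point of `(0,∞)`. -/
def IsCadlag {E : Type*} [TopologicalSpace E] (f : ℝ → E) : Prop :=
  (∀ s : ℝ, 0 ≤ s → ContinuousWithinAt f (Set.Ici s) s) ∧
  (∀ s : ℝ, 0 < s → ∃ L : E, Tendsto f (nhdsWithin s (Set.Iio s)) (nhds L))

/-- A finite partition `0 = τ 0 < τ 1 < ⋯ < τ m = t` of the interval `[0,t]`. -/
structure IntervalPartition (t : ℝ) where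
  m : ℕ
  τ : ℕ → ℝ
  m_pos : 0 < m
  first : τ 0 = 0
  last : τ m = t
  increasing : ∀ i < m, τ i < τ (i + 1)

open Topology

/-!
On `[0, t)` a cadlag function is a uniform limit of step functions `∑ cⱼ 𝟙[aⱼ, ∞)`: a supremum
argument, using right continuity to move past a point and left limits to reach the supremum.
For a single jump `𝟙[a, ∞) c` the left-endpoint Stieltjes sum telescopes to
`(y*(t) - y*(tᵢ)) c`, where `tᵢ` is the first partition point `≥ a`; it lies within one mesh of
`a`, so by right continuity of `y*` the sums converge, and by additivity they converge for every
step function. Replacing `x` by a step function `ε`-close to it on `[0, t)` moves every sum by at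
most `ε V`, so the sums for `x` are Cauchy as the mesh tends to zero.
-/

section StepFunctions

variable {E : Type*} [NormedAddCommGroup E]

def stepFunctions (t : ℝ) : AddSubgroup (ℝ → E) :=
  AddSubgroup.closure {g | ∃ a ∈ Icc 0 t, ∃ c : E, g = (Ici a).indicator fun _ => c}

/-- Constancy of `g` on `[r, ∞)` is what lets a single jump at `r` extend the approximation
past `r`. -/
def StepApproxUpTo (f : ℝ → E) (t ε r : ℝ) : Prop :=
  ∃ g ∈ stepFunctions t, (∀ u ∈ Ico 0 r, ‖f u - g u‖ ≤ ε) ∧ ∀ u, r ≤ u → g u = g r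

variable {f : ℝ → E} {t ε r r' : ℝ}

theorem StepApproxUpTo.extend (h : StepApproxUpTo f t ε r) (hr : 0 ≤ r) (hrr' : r ≤ r')
    (hr't : r' ≤ t) (hosc : ∀ u ∈ Ico r r', ‖f u - f r‖ ≤ ε) : StepApproxUpTo f t ε r' := by
  obtain ⟨g, hg, hfg, hconst⟩ := h
  set g' := g + (Ici r).indicator fun _ => f r - g r
  have hg' : ∀ u, r ≤ u → g' u = f r := fun u hu => by
    simp [g', indicator_of_mem (mem_Ici.2 hu), hconst u hu]
  refine ⟨g', add_mem hg (AddSubgroup.subset_closure ⟨r, ⟨hr, hrr'.trans hr't⟩, _, rfl⟩),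
    fun u hu => ?_, fun u hu => by rw [hg' u (hrr'.trans hu), hg' r' hrr']⟩
  rcases lt_or_ge u r with hur | hru
  · simpa [g', indicator_of_notMem (notMem_Ici.2 hur)] using hfg u ⟨hu.1, hur⟩
  · rw [hg' u hru]
    exact hosc u ⟨hru, hu.2⟩

theorem IsCadlag.exists_mem_stepFunctions_norm_sub_le (hf : IsCadlag f) (ht : 0 ≤ t)
    (hε : 0 < ε) : ∃ g ∈ stepFunctions t, ∀ u ∈ Ico 0 t, ‖f u - g u‖ ≤ ε := by
  set A := Icc 0 t ∩ {r | StepApproxUpTo f t ε r}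
  have h0 : 0 ∈ A := ⟨⟨le_rfl, ht⟩, 0, zero_mem _, by simp, by simp⟩
  have hbdd : BddAbove A := ⟨t, fun r hr => hr.1.2⟩
  set c := sSup A
  have hc : c ∈ Icc 0 t := ⟨le_csSup hbdd h0, csSup_le ⟨0, h0⟩ fun r hr => hr.1.2⟩
  have hPc : StepApproxUpTo f t ε c := by
    rcases hc.1.eq_or_lt with hc0 | hc0
    · exact hc0 ▸ h0.2
    obtain ⟨ℓ, hℓ⟩ := hf.2 c hc0
    obtain ⟨l, hlc, hnear⟩ := (nhdsLT_basis c).eventually_iff.1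
      (hℓ.eventually (Metric.ball_mem_nhds ℓ (half_pos hε)))
    obtain ⟨r, hrA, hlr⟩ := exists_lt_of_lt_csSup ⟨0, h0⟩ hlc
    refine hrA.2.extend hrA.1.1 (le_csSup hbdd hrA) hc.2 fun u hu => ?_
    have hu' : dist (f u) ℓ < ε / 2 := hnear ⟨hlr.trans_le hu.1, hu.2⟩
    have hr' : dist (f r) ℓ < ε / 2 := hnear ⟨hlr, hu.1.trans_lt hu.2⟩
    rw [← dist_eq_norm]
    linarith [dist_triangle_right (f u) (f r) ℓ]
  obtain ⟨u', hcu', hnear⟩ := (nhdsGE_basis c).eventually_iff.1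
    ((hf.1 c hc.1).eventually (Metric.closedBall_mem_nhds (f c) hε))
  have hct : c = t := by
    by_contra hne
    have hmem : min u' t ∈ A := ⟨⟨hc.1.trans (le_min hcu'.le hc.2), min_le_right _ _⟩,
      hPc.extend hc.1 (le_min hcu'.le hc.2) (min_le_right _ _) fun u hu =>
        mem_closedBall_iff_norm.1 (hnear ⟨hu.1, hu.2.trans_le (min_le_left _ _)⟩)⟩
    exact (lt_min hcu' (hc.2.lt_of_ne hne)).not_ge (le_csSup hbdd hmem)
  obtain ⟨g, hg, hfg, -⟩ := hct ▸ hPc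
  exact ⟨g, hg, hfg⟩

end StepFunctions

theorem exists_tendsto_of_forall_dist_le {α F : Type*} [PseudoMetricSpace F] [CompleteSpace F]
    {l : Filter α} {f : α → F}
    (h : ∀ ε > 0, ∃ g : α → F, (∃ L, Tendsto g l (𝓝 L)) ∧ ∀ a, dist (f a) (g a) ≤ ε) :
    ∃ L, Tendsto f l (𝓝 L) := by
  rcases l.eq_or_neBot with rfl | hl
  · obtain ⟨-, ⟨L, -⟩, -⟩ := h 1 one_pos
    exact ⟨L, tendsto_bot⟩
  refine cauchy_map_iff_exists_tendsto.1 (cauchy_map_iff'.2 ?_)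
  refine Metric.uniformity_basis_dist.tendsto_right_iff.2 fun ε hε => ?_
  obtain ⟨g, ⟨L, hL⟩, hfg⟩ := h (ε / 3) (by positivity)
  have hg := Metric.uniformity_basis_dist.tendsto_right_iff.1 (cauchy_map_iff'.1 hL.cauchy_map)
  filter_upwards [hg (ε / 3) (by positivity)] with p hp
  linarith [dist_triangle4 (f p.1) (g p.1) (g p.2) (f p.2), hfg p.1, hfg p.2,
    dist_comm (f p.2) (g p.2)]

namespace IntervalPartition

variable {t : ℝ} (σ : IntervalPartition t)

theorem strictMonoOn_τ : StrictMonoOn σ.τ (Iic σ.m) :=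
  strictMonoOn_Iic_of_lt_succ σ.increasing

theorem τ_mem_Ico {i : ℕ} (hi : i < σ.m) : σ.τ i ∈ Ico 0 t :=
  ⟨σ.first.ge.trans
      (σ.strictMonoOn_τ.monotoneOn (mem_Iic.2 (Nat.zero_le _)) (mem_Iic.2 hi.le) (Nat.zero_le i)),
    (σ.strictMonoOn_τ (mem_Iic.2 hi.le) (mem_Iic.2 le_rfl) hi).trans_eq σ.last⟩

def MeshLt (δ : ℝ) : Prop := ∀ i < σ.m, σ.τ (i + 1) - σ.τ i < δ

def fine (t : ℝ) : Filter (IntervalPartition t) := ⨅ δ > 0, 𝓟 {σ | σ.MeshLt δ}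

theorem hasBasis_fine : (fine t).HasBasis (0 < ·) fun δ => {σ | σ.MeshLt δ} :=
  hasBasis_biInf_principal
    (fun δ hδ δ' hδ' => ⟨min δ δ', show (0 : ℝ) < min δ δ' from lt_min hδ hδ',
      fun _ hσ i hi => (hσ i hi).trans_le (min_le_left _ _),
      fun _ hσ i hi => (hσ i hi).trans_le (min_le_right _ _)⟩)
    ⟨1, show (0 : ℝ) < 1 from one_pos⟩

variable {X F : Type*} [NormedAddCommGroup X] [NormedSpace ℝ X] [NormedAddCommGroup F]
  [NormedSpace ℝ F]

def stieltjesSum (y : ℝ → X →L[ℝ] F) (g : ℝ → X) : F :=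
  ∑ i ∈ Finset.range σ.m, (y (σ.τ (i + 1)) - y (σ.τ i)) (g (σ.τ i))

variable (y : ℝ → X →L[ℝ] F)

@[simp] theorem stieltjesSum_zero : σ.stieltjesSum y 0 = 0 := by
  simp [stieltjesSum]

@[simp] theorem stieltjesSum_add (g h : ℝ → X) :
    σ.stieltjesSum y (g + h) = σ.stieltjesSum y g + σ.stieltjesSum y h := by
  simp only [stieltjesSum, Pi.add_apply, map_add, Finset.sum_add_distrib]

@[simp] theorem stieltjesSum_neg (g : ℝ → X) : σ.stieltjesSum y (-g) = -σ.stieltjesSum y g := by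
  simp only [stieltjesSum, Pi.neg_apply, map_neg, Finset.sum_neg_distrib]

theorem norm_stieltjesSum_sub_le {g h : ℝ → X} {ε : ℝ} (hgh : ∀ u ∈ Ico 0 t, ‖g u - h u‖ ≤ ε) :
    ‖σ.stieltjesSum y g - σ.stieltjesSum y h‖ ≤
      ε * ∑ i ∈ Finset.range σ.m, ‖y (σ.τ (i + 1)) - y (σ.τ i)‖ := by
  rw [stieltjesSum, stieltjesSum, ← Finset.sum_sub_distrib, Finset.mul_sum]
  refine norm_sum_le_of_le _ fun i hi => ?_
  rw [← map_sub, mul_comm]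
  exact (ContinuousLinearMap.le_opNorm _ _).trans
    (mul_le_mul_of_nonneg_left (hgh _ (σ.τ_mem_Ico (Finset.mem_range.1 hi))) (norm_nonneg _))

theorem exists_stieltjesSum_indicator_Ici {a : ℝ} (ha : a ∈ Icc 0 t) (c : X) :
    ∃ i ≤ σ.m, (a ≤ σ.τ i ∧ ∀ δ, σ.MeshLt δ → σ.τ i < a + δ) ∧
      σ.stieltjesSum y ((Ici a).indicator fun _ => c) = (y t - y (σ.τ i)) c := by
  have hex : ∃ i, a ≤ σ.τ i := ⟨σ.m, ha.2.trans_eq σ.last.symm⟩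
  set i := Nat.find hex
  have him : i ≤ σ.m := Nat.find_min' hex (ha.2.trans_eq σ.last.symm)
  have hbefore : ∀ j < i, σ.τ j < a := fun j hj => not_le.1 (Nat.find_min hex hj)
  have hafter : ∀ j ∈ Finset.Ico i σ.m, a ≤ σ.τ j := fun j hj =>
    (Nat.find_spec hex).trans <| σ.strictMonoOn_τ.monotoneOn (mem_Iic.2 him)
      (mem_Iic.2 (Finset.mem_Ico.1 hj).2.le) (Finset.mem_Ico.1 hj).1
  refine ⟨i, him, ⟨Nat.find_spec hex, fun δ hδ => ?_⟩, ?_⟩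
  · rcases Nat.eq_zero_or_pos i with hi0 | hipos
    · have hai : a ≤ σ.τ i := Nat.find_spec hex
      rw [hi0, σ.first] at hai ⊢
      linarith [σ.increasing 0 σ.m_pos, hδ 0 σ.m_pos, σ.first, ha.1]
    · have hstep := hδ (i - 1) (by omega)
      rw [Nat.sub_add_cancel (by omega)] at hstep
      linarith [hbefore (i - 1) (by omega)]
  · rw [stieltjesSum, Finset.range_eq_Ico, ← Finset.sum_Ico_consecutive _ (Nat.zero_le i) him,
      Finset.sum_eq_zero fun j hj => by
        rw [indicator_of_notMem (notMem_Ici.2 (hbefore j (Finset.mem_Ico.1 hj).2)), map_zero],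
      zero_add, Finset.sum_congr rfl fun j hj => by rw [indicator_of_mem (mem_Ici.2 (hafter j hj))],
      ← sum_apply, Finset.sum_Ico_sub (fun j => y (σ.τ j)) him, σ.last]

theorem tendsto_stieltjesSum_indicator_Ici {a : ℝ} (ha : a ∈ Icc 0 t)
    (hy : ContinuousWithinAt y (Ici a) a) (c : X) :
    Tendsto (fun σ : IntervalPartition t => σ.stieltjesSum y ((Ici a).indicator fun _ => c))
      (fine t) (𝓝 ((y t - y a) c)) := by
  choose i _ hi hsum using
    fun σ : IntervalPartition t => σ.exists_stieltjesSum_indicator_Ici y ha c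
  have hτ : Tendsto (fun σ : IntervalPartition t => σ.τ (i σ)) (fine t) (𝓝[≥] a) := by
    refine tendsto_nhdsWithin_iff.2 ⟨?_, Eventually.of_forall fun σ => (hi σ).1⟩
    refine (hasBasis_fine.tendsto_iff Metric.nhds_basis_ball).2 fun ε hε => ⟨ε, hε, fun σ hσ => ?_⟩
    rw [Metric.mem_ball, Real.dist_eq, abs_lt]
    constructor <;> linarith [(hi σ).1, (hi σ).2 ε hσ]
  simp_rw [hsum]
  exact ((ContinuousLinearMap.apply ℝ F c).continuous.tendsto _).comp
    (tendsto_const_nhds.sub (hy.tendsto.comp hτ))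

theorem exists_tendsto_stieltjesSum_of_mem_stepFunctions
    (hy : ∀ s ∈ Icc 0 t, ContinuousWithinAt y (Ici s) s) {g : ℝ → X} (hg : g ∈ stepFunctions t) :
    ∃ L, Tendsto (fun σ : IntervalPartition t => σ.stieltjesSum y g) (fine t) (𝓝 L) := by
  induction hg using AddSubgroup.closure_induction with
  | mem g hg =>
    obtain ⟨a, ha, c, rfl⟩ := hg
    exact ⟨_, tendsto_stieltjesSum_indicator_Ici y ha (hy a ha) c⟩
  | zero => exact ⟨0, by simpa using tendsto_const_nhds⟩
  | add g h _ _ hg hh =>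
    obtain ⟨L, hL⟩ := hg
    obtain ⟨M, hM⟩ := hh
    exact ⟨L + M, by simpa only [stieltjesSum_add] using hL.add hM⟩
  | neg g _ hg =>
    obtain ⟨L, hL⟩ := hg
    exact ⟨-L, by simpa only [stieltjesSum_neg] using hL.neg⟩

end IntervalPartition

theorem riemann_stieltjes_sums_converge_dual_pairing_general
    {X : Type*} [NormedAddCommGroup X] [NormedSpace ℝ X]
    (t : ℝ) (ht : 0 < t)
    (x : ℝ → X) (hx : IsCadlag x)
    (ystar : ℝ → (X →L[ℝ] ℝ)) (hy : IsCadlag ystar)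
    (V : ℝ)
    (hV : ∀ σ : IntervalPartition t,
      ∑ i ∈ Finset.range σ.m, ‖ystar (σ.τ (i + 1)) - ystar (σ.τ i)‖ ≤ V) :
    ∃ L : ℝ, ∀ ε : ℝ, 0 < ε → ∃ δ : ℝ, 0 < δ ∧
      ∀ σ : IntervalPartition t, (∀ i < σ.m, σ.τ (i + 1) - σ.τ i < δ) →
        |(∑ i ∈ Finset.range σ.m,
            (ystar (σ.τ (i + 1)) - ystar (σ.τ i)) (x (σ.τ i))) - L| < ε := by
  obtain ⟨L, hL⟩ : ∃ L, Tendsto (fun σ : IntervalPartition t => σ.stieltjesSum ystar x)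
      (IntervalPartition.fine t) (𝓝 L) := by
    refine exists_tendsto_of_forall_dist_le fun ε hε => ?_
    have hη : 0 < ε / (|V| + 1) := by positivity
    obtain ⟨g, hg, hxg⟩ := hx.exists_mem_stepFunctions_norm_sub_le ht.le hη
    refine ⟨_, IntervalPartition.exists_tendsto_stieltjesSum_of_mem_stepFunctions ystar
      (fun s hs => hy.1 s hs.1) hg, fun σ => ?_⟩
    calc dist (σ.stieltjesSum ystar x) (σ.stieltjesSum ystar g)
        ≤ ε / (|V| + 1) * V := by
          rw [dist_eq_norm]
          exact (σ.norm_stieltjesSum_sub_le ystar hxg).trans (by gcongr; exact hV σ)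
      _ ≤ ε := by
          rw [div_mul_eq_mul_div, div_le_iff₀ (by positivity)]
          nlinarith [le_abs_self V]
  refine ⟨L, fun ε hε => ?_⟩
  obtain ⟨δ, hδ, hLδ⟩ :=
    (IntervalPartition.hasBasis_fine.tendsto_iff Metric.nhds_basis_ball).1 hL ε hε
  exact ⟨δ, hδ, fun σ hσ => by rw [← Real.dist_eq]; exact hLδ σ hσ⟩

/-- Convergence of left-endpoint Riemann–Stieltjes sums: if `x : [0,∞) → X` is
cadlag and `y* : [0,∞) → X*` is cadlag with finite total variation on `[0,t]`,
then the sums `∑ ⟨x(t_i), y*(t_{i+1}) − y*(t_i)⟩` converge as the mesh goes to `0`. -/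
theorem riemann_stieltjes_sums_converge_dual_pairing
    {X : Type*} [NormedAddCommGroup X] [NormedSpace ℝ X] [CompleteSpace X]
    (t : ℝ) (ht : 0 < t)
    (x : ℝ → X) (hx : IsCadlag x)
    (ystar : ℝ → (X →L[ℝ] ℝ)) (hy : IsCadlag ystar)
    (V : ℝ)
    (hV : ∀ σ : IntervalPartition t,
      ∑ i ∈ Finset.range σ.m, ‖ystar (σ.τ (i + 1)) - ystar (σ.τ i)‖ ≤ V) :
    ∃ L : ℝ, ∀ ε : ℝ, 0 < ε → ∃ δ : ℝ, 0 < δ ∧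
      ∀ σ : IntervalPartition t, (∀ i < σ.m, σ.τ (i + 1) - σ.τ i < δ) →
        |(∑ i ∈ Finset.range σ.m,
            (ystar (σ.τ (i + 1)) - ystar (σ.τ i)) (x (σ.τ i))) - L| < ε :=
  riemann_stieltjes_sums_converge_dual_pairing_general t ht x hx ystar hy V hV
end
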